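/- Fuchs' tree identity for Bernoulli numbers: consider the binary tree with root (1), where a node (a₁,…,a_r) has left child (1, a₁,…,a_r) and right child (a₁+1, a₂,…,a_r). Assigning to node (a₁,…,a_r) the value ∏_{i=1}^{r} (−1)/( (a_i + 1)! ), the sum of the values over all nodes at level k equals B_k/k! for every k ≥ 1. -/

import Mathlib

/- STATEMENT 14 (Fuchs' tree): the binary tree has root (1) at level 1; a node
(a₁,…,a_r) has children (1, a₁,…,a_r) and (a₁+1, a₂,…,a_r).  Assigning to a node
(a₁,…,a_r) the value ∏_i (−1)/(a_i+1)!, the sum of the values over the nodes at level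
k equals B_k/k! for every k ≥ 1. -/

/-- The two children of a node (a₁,…,a_r). -/
def fuchsChildren : List ℕ → List (List ℕ)
  | [] => []
  | a :: rest => [1 :: a :: rest, (a + 1) :: rest]

/-- The nodes at each level: level 1 is the root (1). -/
def fuchsLevel : ℕ → List (List ℕ)
  | 0 => []
  | 1 => [[1]]
  | n + 1 => (fuchsLevel n).flatMap fuchsChildren

/-- The value ∏_{i=1}^{r} (−1)/((a_i + 1)!) of a node. -/
def fuchsValue (N : List ℕ) : ℚ :=
  (N.map fun a => -(((a + 1).factorial : ℚ))⁻¹).prod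

/-!
Weight a node `a :: N` by `f a * fuchsValue N`; let `F k f` (`headWeightedSum`) be the sum of
these weights over level `k` and `S k` (`levelSum`) the sum of the node values. The children
`1 :: a :: N` and `(a+1) :: N` of `a :: N` have weights `f 1 * fuchsValue (a :: N)` and
`f (a+1) * fuchsValue N`, hence `F (k+1) f = f 1 * S k + F k (f ∘ succ)`. Since `S k = F k g`
for `g a = -1/(a+1)!`, induction on `k` gives `F k f = ∑_{a=1}^k f a * B_{k-a}/(k-a)!` for all
`f` at once, provided `∑_{a=1}^k g a * B_{k-a}/(k-a)! = B_k/k!`; that is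
`∑_{j<n} (n choose j) B_j = 0` (`n ≥ 2`) divided by `n!`.
-/

open Finset Nat

namespace Fuchs

theorem ne_nil_of_mem_fuchsChildren {M N : List ℕ} (h : N ∈ fuchsChildren M) : N ≠ [] := by
  cases M <;> aesop (add simp fuchsChildren)

theorem ne_nil_of_mem_fuchsLevel {k : ℕ} {N : List ℕ} (h : N ∈ fuchsLevel k) : N ≠ [] := by
  match k, h with
  | 1, h => simp_all [fuchsLevel]
  | n + 2, h =>
    obtain ⟨M, -, hM⟩ := List.mem_flatMap.1 h
    exact ne_nil_of_mem_fuchsChildren hM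

theorem fuchsLevel_succ_succ (n : ℕ) :
    fuchsLevel (n + 2) = (fuchsLevel (n + 1)).flatMap fuchsChildren :=
  rfl

theorem fuchsValue_cons (a : ℕ) (N : List ℕ) :
    fuchsValue (a :: N) = -((a + 1)! : ℚ)⁻¹ * fuchsValue N := by
  simp [fuchsValue]

def headWeightedValue (f : ℕ → ℚ) : List ℕ → ℚ
  | [] => 0
  | a :: N => f a * fuchsValue N

def headWeightedSum (k : ℕ) (f : ℕ → ℚ) : ℚ :=
  ((fuchsLevel k).map (headWeightedValue f)).sum

def levelSum (k : ℕ) : ℚ :=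
  ((fuchsLevel k).map fuchsValue).sum

theorem sum_headWeightedValue_fuchsChildren (f : ℕ → ℚ) {N : List ℕ} (hN : N ≠ []) :
    ((fuchsChildren N).map (headWeightedValue f)).sum
      = f 1 * fuchsValue N + headWeightedValue (fun a => f (a + 1)) N := by
  obtain ⟨a, N, rfl⟩ := List.exists_cons_of_ne_nil hN
  simp [fuchsChildren, headWeightedValue]

theorem headWeightedSum_add_two (n : ℕ) (f : ℕ → ℚ) :
    headWeightedSum (n + 2) f
      = f 1 * levelSum (n + 1) + headWeightedSum (n + 1) (fun a => f (a + 1)) := by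
  rw [headWeightedSum, fuchsLevel_succ_succ, List.map_flatMap, List.flatMap_def, List.sum_flatten,
    List.map_map, Function.comp_def, List.map_congr_left
    (fun N hN => sum_headWeightedValue_fuchsChildren f (ne_nil_of_mem_fuchsLevel hN)),
    List.sum_map_add, List.sum_map_mul_left, levelSum, headWeightedSum]

theorem levelSum_eq_headWeightedSum (k : ℕ) :
    levelSum k = headWeightedSum k (fun a => -((a + 1)! : ℚ)⁻¹) := by
  rw [levelSum, headWeightedSum]
  congr 1
  refine List.map_congr_left fun N hN => ?_
  obtain ⟨a, N, rfl⟩ := List.exists_cons_of_ne_nil (ne_nil_of_mem_fuchsLevel hN)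
  rw [fuchsValue_cons, headWeightedValue]

theorem sum_bernoulli_div_factorial_div_factorial {n : ℕ} (hn : n ≠ 1) :
    ∑ k ∈ range n, bernoulli k / k ! / (n - k)! = 0 := by
  have h := sum_bernoulli n
  rw [if_neg hn] at h
  have hn! : (n ! : ℚ) ≠ 0 := by positivity
  rw [← mul_eq_zero_iff_left hn!, ← h, Finset.mul_sum]
  refine Finset.sum_congr rfl fun k hk => ?_
  rw [Nat.cast_choose ℚ (mem_range.1 hk).le]
  field_simp

theorem bernoulli_succ_div_factorial (n : ℕ) :
    bernoulli (n + 1) / (n + 1)! =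
      ∑ a ∈ range (n + 1), -((a + 2)! : ℚ)⁻¹ * (bernoulli (n - a) / (n - a)!) := by
  have h := sum_bernoulli_div_factorial_div_factorial (n := n + 2) (by omega)
  rw [sum_range_succ, ← sum_range_reflect, Nat.add_sub_cancel,
    show n + 2 - (n + 1) = 1 by omega, factorial_one, cast_one, div_one] at h
  rw [eq_neg_of_add_eq_zero_right h, ← sum_neg_distrib]
  refine sum_congr rfl fun a ha => ?_
  rw [show n + 2 - (n - a) = a + 2 by have := mem_range.1 ha; omega]
  ring

theorem headWeightedSum_succ (n : ℕ) (f : ℕ → ℚ) :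
    headWeightedSum (n + 1) f =
      ∑ a ∈ range (n + 1), f (a + 1) * (bernoulli (n - a) / (n - a)!) := by
  induction n generalizing f with
  | zero => simp [headWeightedSum, fuchsLevel, headWeightedValue, fuchsValue]
  | succ n ih =>
    have hS : levelSum (n + 1) = bernoulli (n + 1) / (n + 1)! := by
      rw [levelSum_eq_headWeightedSum, ih, bernoulli_succ_div_factorial]
    rw [headWeightedSum_add_two, hS, ih, sum_range_succ' _ (n + 1)]
    simp only [Nat.add_sub_add_right, Nat.sub_zero, zero_add]
    ring

end Fuchs

theorem fuchs_tree_bernoulli :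
    ∀ k : ℕ, 1 ≤ k →
      ((fuchsLevel k).map fuchsValue).sum = bernoulli k / (k.factorial : ℚ) := by
  rintro (_ | n) hk
  · omega
  rw [← Fuchs.levelSum, Fuchs.levelSum_eq_headWeightedSum, Fuchs.headWeightedSum_succ,
    Fuchs.bernoulli_succ_div_factorial]
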